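/- arXiv:1102.0874 — 6 statements merged into one kernel-verified Lean document; each statement's English description precedes it below -/
import Mathlib

section
/- Let a finite sequence of 2-colored points (a chain) have b points of the major color and w points of the minor color, and suppose its major points are covered by pairwise disjoint bodies, where d₀₀ bodies have neither head nor tail, d₁₁ have both, d₁₀ and d₀₁ have exactly one. If the bodies can be extended to pairwise disjoint hedgehogs covering the whole chain, then b − w = d₀₀ − d₁₁. -/
/-!
Within one alternating path the major and minor points pair off, except that a path starting
and ending on a major point has one surplus major point and a path starting and ending on a
minor point has one surplus minor point. Summing this over a cover of the chain gives the
balance, since the cover uses every point exactly once.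
-/

/-- `1` for a hedgehog on a body with neither head nor tail, `-1` for one with both, else `0`. -/
def endpointExcess (l : List Bool) : ℤ :=
  (if l.head? = some true ∧ l.getLast? = some true then 1 else 0) -
    if l.head? = some false ∧ l.getLast? = some false then 1 else 0

theorem endpointExcess_cons_cons {a b : Bool} (hab : a ≠ b) (t : List Bool) :
    endpointExcess (a :: b :: t) = endpointExcess (b :: t) + if a then 1 else -1 := by
  obtain ⟨c, hc⟩ : ∃ c, (b :: t).getLast? = some c :=
    ⟨_, List.getLast?_eq_some_getLast (List.cons_ne_nil _ _)⟩
  simp only [endpointExcess, List.getLast?_cons_cons, hc, List.head?_cons]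
  cases a <;> cases b <;> cases c <;> simp at hab ⊢

theorem count_true_sub_count_false_of_isChain_ne {l : List Bool} (hl : l.IsChain (· ≠ ·)) :
    (l.count true : ℤ) - l.count false = endpointExcess l := by
  induction l with
  | nil => rfl
  | cons a t ih =>
    cases t with
    | nil => cases a <;> rfl
    | cons b t =>
      obtain ⟨hab, ht⟩ := List.isChain_cons_cons.mp hl
      rw [endpointExcess_cons_cons hab, ← ih ht, List.count_cons, List.count_cons (l := b :: t)]
      cases a <;>
        simp only [BEq.rfl, beq_true, beq_false, Bool.not_true, Bool.false_eq_true, ↓reduceIte,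
          add_zero, Nat.cast_add, Nat.cast_one] <;> ring

theorem List.count_sub_count_flatten {α : Type*} [BEq α] (L : List (List α)) (a b : α) :
    (L.flatten.count a : ℤ) - L.flatten.count b =
      (L.map fun l => (l.count a : ℤ) - l.count b).sum := by
  induction L with
  | nil => rfl
  | cons l L ih =>
    simp only [List.flatten_cons, List.count_append, List.map_cons, List.sum_cons, ← ih]
    push_cast
    ring

theorem List.sum_map_ite_sub_ite {α : Type*} (p q : α → Prop) [DecidablePred p]
    [DecidablePred q] (L : List α) :
    (L.map fun x => (if p x then 1 else 0) - if q x then (1 : ℤ) else 0).sum =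
      (L.countP fun x => decide (p x) : ℤ) - L.countP fun x => decide (q x) := by
  induction L with
  | nil => rfl
  | cons x L ih =>
    rw [List.map_cons, List.sum_cons, ih, List.countP_cons, List.countP_cons]
    push_cast
    simp only [decide_eq_true_eq]
    ring

theorem hedgehog_cover_balance_general (C : List Bool) (hs : List (List Bool))
    (halt : ∀ l ∈ hs, l.Chain' (· ≠ ·))
    (hcover : List.Perm hs.flatten C) :
    (C.count true : ℤ) - C.count false =
      (hs.countP (fun l => decide (l.head? = some true ∧ l.getLast? = some true)) : ℤ)
        - hs.countP (fun l => decide (l.head? = some false ∧ l.getLast? = some false)) := by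
  rw [← hcover.count_eq true, ← hcover.count_eq false, List.count_sub_count_flatten,
    List.map_congr_left fun l hl => count_true_sub_count_false_of_isChain_ne (halt l hl)]
  exact List.sum_map_ite_sub_ite _ _ hs

/-- A chain `C` of 2-colored points (`true` = major, `false` = minor)
with `b` major and `w` minor points is covered by pairwise disjoint hedgehogs
(alternating paths); together the hedgehogs use each point of the chain exactly once
(their concatenation is a permutation of `C`). A hedgehog's body has no head iff the
first point of the hedgehog is major and no tail iff its last point is major.
Then `b - w = d₀₀ - d₁₁`, where `d₀₀` counts hedgehogs built on bodies with neither
head nor tail and `d₁₁` those with both. -/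
theorem hedgehog_cover_balance (C : List Bool) (hs : List (List Bool))
    (hne : ∀ l ∈ hs, l ≠ [])
    (halt : ∀ l ∈ hs, l.Chain' (· ≠ ·))
    (hcover : List.Perm hs.flatten C) :
    (C.count true : ℤ) - C.count false =
      (hs.countP (fun l => decide (l.head? = some true ∧ l.getLast? = some true)) : ℤ)
        - hs.countP (fun l => decide (l.head? = some false ∧ l.getLast? = some false)) :=
  hedgehog_cover_balance_general C hs halt hcover
end

section
/- A connected finite simple graph G is a caterpillar if and only if G contains no cycle and no subgraph isomorphic to K⁺₁,₃ (the 3-star with each edge subdivided once). -/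
/-!
Let `S` be the set of non-leaf vertices of the tree `G`. Inner vertices of paths have degree at
least 2, so `G[S]` is again a tree. A copy of `K⁺₁,₃` in `G` is the same thing as a vertex with
three neighbours in `S`: its centre and middle vertices lie in `S`, and conversely each of three
such neighbours has a further neighbour away from the centre, the seven vertices being distinct
because `G` has no cycles. So `G` is `K⁺₁,₃`-free iff `G[S]` has maximum degree at most 2, and a
finite tree of maximum degree at most 2 is a path graph: a longest path cannot be prolonged at
its ends nor branch off at an inner vertex, so it visits every vertex, and acyclicity leaves no
edge outside it.
-/

open SimpleGraph

/-- `K⁺₁,₃`: the 3-star with each edge subdivided once — a tree on 7 vertices with a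
central vertex `0` adjacent to the middle vertices `1, 2, 3`, each middle vertex
adjacent to one further leaf (`4, 5, 6` respectively). -/
def KPlus13 : SimpleGraph (Fin 7) :=
  SimpleGraph.fromEdgeSet {s(0, 1), s(0, 2), s(0, 3), s(1, 4), s(2, 5), s(3, 6)}

/-- A caterpillar: a tree in which the non-leaf vertices (vertices of degree ≥ 2)
induce a path. -/
def IsCaterpillar {V : Type*} [Fintype V] [DecidableEq V] (G : SimpleGraph V)
    [DecidableRel G.Adj] : Prop :=
  G.IsTree ∧ ∃ n : ℕ, Nonempty (G.induce {v | 2 ≤ G.degree v} ≃g SimpleGraph.pathGraph n)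

namespace SimpleGraph

variable {V : Type*} {G : SimpleGraph V}

section Degree

variable {v : V} [Fintype (G.neighborSet v)]

lemma two_le_degree_of_adj {a b : V} (ha : G.Adj v a) (hb : G.Adj v b) (hab : a ≠ b) :
    2 ≤ G.degree v := by
  rw [← card_neighborFinset_eq_degree]
  exact Finset.one_lt_card.2 ⟨a, by simpa, b, by simpa, hab⟩

lemma subsingleton_neighborSet_of_degree_lt_two (h : G.degree v < 2) :
    (G.neighborSet v).Subsingleton :=
  fun _ ha _ hb ↦ by_contra fun hab ↦ h.not_ge (two_le_degree_of_adj ha hb hab)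

lemma exists_adj_ne_of_two_le_degree (h : 2 ≤ G.degree v) (w : V) : ∃ u, G.Adj v u ∧ u ≠ w := by
  rw [← card_neighborFinset_eq_degree] at h
  obtain ⟨u, hu, huw⟩ := Finset.exists_mem_ne h w
  exact ⟨u, (mem_neighborFinset ..).1 hu, huw⟩

lemma exists_three_adj_of_two_lt_degree (h : 2 < G.degree v) :
    ∃ a b c, G.Adj v a ∧ G.Adj v b ∧ G.Adj v c ∧ a ≠ b ∧ a ≠ c ∧ b ≠ c := by
  rw [← card_neighborFinset_eq_degree] at h
  obtain ⟨a, ha, b, hb, c, hc, hab, hac, hbc⟩ := Finset.two_lt_card.1 h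
  exact ⟨a, b, c, by simpa using ha, by simpa using hb, by simpa using hc, hab, hac, hbc⟩

end Degree

lemma pathGraph_eq_or_eq_or_eq_of_adj {n : ℕ} {i a b c : Fin n} (ha : (pathGraph n).Adj i a)
    (hb : (pathGraph n).Adj i b) (hc : (pathGraph n).Adj i c) : a = b ∨ a = c ∨ b = c := by
  simp only [pathGraph_adj, Fin.ext_iff] at *
  omega

namespace Walk

variable {u v x y : V} {p : G.Walk u v}

lemma IsPath.mem_support_of_adj_start (hp : p.IsPath)
    (hmax : ∀ w (q : G.Walk w v), q.IsPath → q.length ≤ p.length) (hadj : G.Adj u x) :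
    x ∈ p.support := by
  by_contra hx
  simpa using hmax x (cons hadj.symm p) (hp.cons hx)

lemma IsPath.mem_support_of_adj_of_degree_le_two [Fintype (G.neighborSet x)] (hp : p.IsPath)
    (hx : x ∈ p.support) (hxu : x ≠ u) (hxv : x ≠ v) (hdeg : G.degree x ≤ 2)
    (hadj : G.Adj x y) : y ∈ p.support := by
  obtain ⟨i, rfl, hi⟩ := mem_support_iff_exists_getVert.1 hx
  have hi₀ : i ≠ 0 := by rintro rfl; simp at hxu
  have hil : i < p.length := lt_of_le_of_ne hi (by rintro rfl; simp at hxv)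
  have hN : p.toSubgraph.neighborSet (p.getVert i) = G.neighborSet (p.getVert i) := by
    refine Set.eq_of_subset_of_ncard_le (p.toSubgraph.neighborSet_subset _) ?_ (Set.toFinite _)
    rwa [hp.ncard_neighborSet_toSubgraph_internal_eq_two hi₀ hil, ← Nat.card_coe_set_eq,
      Nat.card_eq_fintype_card, card_neighborSet_eq_degree]
  have hadj' : p.toSubgraph.Adj (p.getVert i) y := by
    rwa [← Subgraph.mem_neighborSet, hN]
  rw [← mem_verts_toSubgraph]
  exact hadj'.snd_mem

end Walk

theorem Connected.exists_isHamiltonian_of_degree_le_two [DecidableEq V] [Finite V]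
    [G.LocallyFinite] (hG : G.Connected) (hdeg : ∀ v, G.degree v ≤ 2) :
    ∃ (u v : V) (p : G.Walk u v), p.IsHamiltonian := by
  classical
  have := Fintype.ofFinite V
  obtain ⟨u₀⟩ := hG.nonempty
  have : Nonempty (Σ u v, G.Path u v) := ⟨⟨u₀, u₀, Path.nil⟩⟩
  obtain ⟨⟨u, v, p, hp⟩, hmax⟩ :=
    Finite.exists_max fun q : Σ u v, G.Path u v ↦ (q.2.2 : G.Walk q.1 q.2.1).length
  have hlongest : ∀ a b (q : G.Walk a b), q.IsPath → q.length ≤ p.length :=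
    fun a b q hq ↦ hmax ⟨a, b, q, hq⟩
  have hclosed : ∀ x ∈ p.support, ∀ y, G.Adj x y → y ∈ p.support := by
    intro x hx y hxy
    by_cases hxu : x = u
    · subst hxu
      exact hp.mem_support_of_adj_start (fun w q hq ↦ hlongest w v q hq) hxy
    by_cases hxv : x = v
    · subst hxv
      simpa using hp.reverse.mem_support_of_adj_start
        (fun w q hq ↦ by simpa using hlongest w u q hq) hxy
    exact hp.mem_support_of_adj_of_degree_le_two hx hxu hxv (hdeg x) hxy
  refine ⟨u, v, p, hp.isHamiltonian_iff.2 fun w ↦ ?_⟩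
  by_contra hw
  obtain ⟨d, -, hd, hdw⟩ := (hG.preconnected u w).some.exists_boundary_dart
    {x | x ∈ p.support} p.start_mem_support hw
  exact hdw (hclosed _ hd _ d.adj)

lemma IsAcyclic.mem_edges_of_adj [DecidableEq V] (hG : G.IsAcyclic) {u v x y : V}
    (p : G.Walk u v) (hxy : G.Adj x y) (hx : x ∈ p.support) (hy : y ∈ p.support) :
    s(x, y) ∈ p.edges := by
  have := isBridge_iff_forall_walk_mem_edges.1 (isAcyclic_iff_forall_adj_isBridge.1 hG hxy)
    ((p.takeUntil x hx).reverse.append (p.takeUntil y hy))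
  rw [Walk.edges_append, Walk.edges_reverse, List.mem_append, List.mem_reverse] at this
  exact this.elim (p.edges_takeUntil_subset_edges hx ·) (p.edges_takeUntil_subset_edges hy ·)

lemma IsAcyclic.toSubgraph_eq_top [DecidableEq V] (hG : G.IsAcyclic) {u v : V}
    {p : G.Walk u v} (hp : p.IsHamiltonian) : p.toSubgraph = ⊤ := by
  ext x y
  · simp [hp.mem_support]
  · simp only [Walk.adj_toSubgraph_iff_mem_edges, Subgraph.top_adj]
    exact ⟨p.adj_of_mem_edges,
      fun hxy ↦ hG.mem_edges_of_adj p hxy (hp.mem_support x) (hp.mem_support y)⟩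

lemma IsAcyclic.nonempty_iso_pathGraph_of_isHamiltonian [DecidableEq V] (hG : G.IsAcyclic)
    {u v : V} {p : G.Walk u v} (hp : p.IsHamiltonian) :
    Nonempty (G ≃g pathGraph (p.length + 1)) := by
  have e := hp.isPath.pathGraphIsoToSubgraph
  rw [hG.toSubgraph_eq_top hp] at e
  exact ⟨(e.trans Subgraph.topIso).symm⟩

theorem IsAcyclic.exists_iso_pathGraph [Finite V] [G.LocallyFinite] (hG : G.IsAcyclic)
    (hconn : G.Preconnected) (hdeg : ∀ v, G.degree v ≤ 2) :
    ∃ n, Nonempty (G ≃g pathGraph n) := by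
  classical
  cases isEmpty_or_nonempty V
  · exact ⟨0, ⟨⟨Equiv.equivOfIsEmpty V (Fin 0), fun {a} ↦ isEmptyElim a⟩⟩⟩
  · obtain ⟨u, v, p, hp⟩ := Connected.exists_isHamiltonian_of_degree_le_two ⟨hconn⟩ hdeg
    exact ⟨_, hG.nonempty_iso_pathGraph_of_isHamiltonian hp⟩

lemma IsAcyclic.nodup_of_adj_of_ne (hG : G.IsAcyclic) {x₀ x₁ x₂ x₃ x₄ : V}
    (h₀₁ : G.Adj x₀ x₁) (h₁₂ : G.Adj x₁ x₂) (h₂₃ : G.Adj x₂ x₃) (h₃₄ : G.Adj x₃ x₄)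
    (h₀₂ : x₀ ≠ x₂) (h₁₃ : x₁ ≠ x₃) (h₂₄ : x₂ ≠ x₄) : [x₀, x₁, x₂, x₃, x₄].Nodup := by
  have hp := (hG.isPath_iff_isChain (.cons h₀₁ (.cons h₁₂ (.cons h₂₃ (.cons h₃₄ .nil))))).2
    (by simp [h₀₁.ne, h₁₂.ne, h₂₃.ne, h₀₂, h₁₃, h₂₄])
  simpa using hp.support_nodup

lemma IsAcyclic.exists_injective_hom_kPlus13 (hG : G.IsAcyclic) {v a b c a' b' c' : V}
    (ha : G.Adj v a) (hb : G.Adj v b) (hc : G.Adj v c) (hab : a ≠ b) (hac : a ≠ c) (hbc : b ≠ c)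
    (ha' : G.Adj a a') (hb' : G.Adj b b') (hc' : G.Adj c c')
    (hva' : a' ≠ v) (hvb' : b' ≠ v) (hvc' : c' ≠ v) :
    ∃ f : KPlus13 →g G, Function.Injective f := by
  -- every two of the seven vertices lie on one of these three paths through `v`
  have hab' := hG.nodup_of_adj_of_ne ha'.symm ha.symm hb hb' hva' hab hvb'.symm
  have hac' := hG.nodup_of_adj_of_ne ha'.symm ha.symm hc hc' hva' hac hvc'.symm
  have hbc' := hG.nodup_of_adj_of_ne hb'.symm hb.symm hc hc' hvb' hbc hvc'.symm
  simp only [List.nodup_cons, List.mem_cons, List.not_mem_nil] at hab' hac' hbc'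
  refine ⟨⟨![v, a, b, c, a', b', c'], fun {x y} h ↦ ?_⟩, ?_⟩
  · simp only [KPlus13, fromEdgeSet_adj, Set.mem_insert_iff, Set.mem_singleton_iff] at h
    fin_cases x <;> fin_cases y <;> simp_all [adj_comm]
  · rw [← List.nodup_ofFn]
    simp only [RelHom.coeFn_mk, List.ofFn_succ, List.ofFn_zero, Matrix.cons_val,
      Fin.succ_zero_eq_one, Fin.succ_one_eq_two, Fin.reduceSucc]
    grind

lemma IsAcyclic.degree_induce_le_two [G.LocallyFinite] (hG : G.IsAcyclic)
    (hfree : ¬ ∃ f : KPlus13 →g G, Function.Injective f) (x : {v | 2 ≤ G.degree v})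
    [Fintype ((G.induce {v | 2 ≤ G.degree v}).neighborSet x)] :
    (G.induce {v | 2 ≤ G.degree v}).degree x ≤ 2 := by
  by_contra! h
  obtain ⟨⟨a, ha⟩, ⟨b, hb⟩, ⟨c, hc⟩, hxa, hxb, hxc, hab, hac, hbc⟩ :=
    exists_three_adj_of_two_lt_degree h
  obtain ⟨a', haa', ha'⟩ := exists_adj_ne_of_two_le_degree ha x
  obtain ⟨b', hbb', hb'⟩ := exists_adj_ne_of_two_le_degree hb x
  obtain ⟨c', hcc', hc'⟩ := exists_adj_ne_of_two_le_degree hc x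
  exact hfree (hG.exists_injective_hom_kPlus13 (induce_adj.1 hxa) (induce_adj.1 hxb)
    (induce_adj.1 hxc) (by simpa using hab) (by simpa using hac) (by simpa using hbc)
    haa' hbb' hcc' ha' hb' hc')

lemma not_injective_hom_kPlus13_of_iso_pathGraph [G.LocallyFinite] {n : ℕ}
    (φ : G.induce {v | 2 ≤ G.degree v} ≃g pathGraph n) (f : KPlus13 →g G) :
    ¬ Function.Injective f := by
  intro hf
  obtain ⟨h01, h02, h03, h14, h25, h36⟩ : KPlus13.Adj 0 1 ∧ KPlus13.Adj 0 2 ∧ KPlus13.Adj 0 3 ∧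
      KPlus13.Adj 1 4 ∧ KPlus13.Adj 2 5 ∧ KPlus13.Adj 3 6 := by
    simp [KPlus13]
  have hspine : ∀ {i j k}, KPlus13.Adj i j → KPlus13.Adj i k → j ≠ k → 2 ≤ G.degree (f i) :=
    fun hj hk hjk ↦ two_le_degree_of_adj (f.map_adj hj) (f.map_adj hk) (hf.ne hjk)
  let c : {v | 2 ≤ G.degree v} := ⟨f 0, hspine h01 h02 (by decide)⟩
  let m₁ : {v | 2 ≤ G.degree v} := ⟨f 1, hspine h01.symm h14 (by decide)⟩
  let m₂ : {v | 2 ≤ G.degree v} := ⟨f 2, hspine h02.symm h25 (by decide)⟩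
  let m₃ : {v | 2 ≤ G.degree v} := ⟨f 3, hspine h03.symm h36 (by decide)⟩
  have h₁ : (pathGraph n).Adj (φ c) (φ m₁) := φ.map_adj_iff.2 (induce_adj.2 (f.map_adj h01))
  have h₂ : (pathGraph n).Adj (φ c) (φ m₂) := φ.map_adj_iff.2 (induce_adj.2 (f.map_adj h02))
  have h₃ : (pathGraph n).Adj (φ c) (φ m₃) := φ.map_adj_iff.2 (induce_adj.2 (f.map_adj h03))
  obtain h | h | h := pathGraph_eq_or_eq_or_eq_of_adj h₁ h₂ h₃ <;>
    simpa [m₁, m₂, m₃, hf.eq_iff] using φ.injective h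

end SimpleGraph

/-- A connected finite simple graph is a caterpillar if and only if it
contains no cycle and no subgraph isomorphic to `K⁺₁,₃` (no injective graph
homomorphism from `K⁺₁,₃`). -/
theorem caterpillar_iff {V : Type*} [Fintype V] [DecidableEq V]
    (G : SimpleGraph V) [DecidableRel G.Adj] (hconn : G.Connected) :
    IsCaterpillar G ↔
      (G.IsAcyclic ∧ ¬ ∃ f : KPlus13 →g G, Function.Injective f) := by
  constructor
  · rintro ⟨hT, n, ⟨φ⟩⟩
    exact ⟨hT.isAcyclic, fun ⟨f, hf⟩ ↦ not_injective_hom_kPlus13_of_iso_pathGraph φ f hf⟩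
  · rintro ⟨hG, hfree⟩
    classical
    refine ⟨⟨hconn, hG⟩, (hG.induce _).exists_iso_pathGraph ?_ 
      fun x ↦ hG.degree_induce_le_two hfree x⟩
    exact hconn.preconnected.induce_of_degree_eq_one fun v hv ↦
      subsingleton_neighborSet_of_degree_lt_two (not_le.1 hv)
end

section
/- Let n ≥ 3 and let k₃,…,k_n, h₃,…,h_n, n₁, n₂ be nonnegative integers satisfying n = n₁ + 2n₂ + Σᵢ₌₃ⁿ i(k_i + h_i), Σᵢ₌₃ⁿ k_i + Σᵢ₌₃ⁿ (i−1)h_i + n₂ + n₁ ≥ ⌊n/2⌋, and ⌊n/2⌋ + 1 ≥ Σᵢ₌₃ⁿ h_i + Σᵢ₌₃ⁿ (i−1)k_i + n₂. Then 2(2 Σᵢ₌₃ⁿ k_i − 1) ≤ n. -/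
/-! Stars on `i ≥ 3` vertices with black centre contribute `i - 1 ≥ 2` white vertices each, so
twice their number is at most the number of white vertices, which equitability bounds by
`⌊n/2⌋ + 1`. -/

theorem mul_sum_Icc_le_sum_pred_mul (a n : ℕ) (k : ℕ → ℕ) :
    (a - 1) * ∑ i ∈ Finset.Icc a n, k i ≤ ∑ i ∈ Finset.Icc a n, (i - 1) * k i := by
  rw [Finset.mul_sum]
  exact Finset.sum_le_sum fun i hi =>
    Nat.mul_le_mul_right _ (Nat.sub_le_sub_right (Finset.mem_Icc.mp hi).1 1)

theorem star_caterpillar_arith_general (n n2 : ℕ) (k h : ℕ → ℕ)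
    (hwhite : (∑ i ∈ Finset.Icc 3 n, h i)
        + (∑ i ∈ Finset.Icc 3 n, (i - 1) * k i) + n2 ≤ n / 2 + 1) :
    2 * (2 * (∑ i ∈ Finset.Icc 3 n, (k i : ℤ)) - 1) ≤ (n : ℤ) := by
  have hk := mul_sum_Icc_le_sum_pred_mul 3 n k
  have key : 4 * ∑ i ∈ Finset.Icc 3 n, k i ≤ n + 2 := by omega
  have : 4 * ∑ i ∈ Finset.Icc 3 n, (k i : ℤ) ≤ n + 2 := by exact_mod_cast key
  linarith

/-- the arithmetic core of the star-to-caterpillar construction.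
If `n ≥ 3` and nonnegative integers `k i`, `h i` (for `3 ≤ i ≤ n`), `n₁`, `n₂`
satisfy `n = n₁ + 2 n₂ + Σ i (kᵢ + hᵢ)`,
`Σ kᵢ + Σ (i-1) hᵢ + n₂ + n₁ ≥ ⌊n/2⌋` and `⌊n/2⌋ + 1 ≥ Σ hᵢ + Σ (i-1) kᵢ + n₂`,
then `2 (2 Σ kᵢ - 1) ≤ n`. -/
theorem star_caterpillar_arith (n n1 n2 : ℕ) (k h : ℕ → ℕ) (hn : 3 ≤ n)
    (htot : n = n1 + 2 * n2 + ∑ i ∈ Finset.Icc 3 n, i * (k i + h i))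
    (hblack : n / 2 ≤ (∑ i ∈ Finset.Icc 3 n, k i)
        + (∑ i ∈ Finset.Icc 3 n, (i - 1) * h i) + n2 + n1)
    (hwhite : (∑ i ∈ Finset.Icc 3 n, h i)
        + (∑ i ∈ Finset.Icc 3 n, (i - 1) * k i) + n2 ≤ n / 2 + 1) :
    2 * (2 * (∑ i ∈ Finset.Icc 3 n, (k i : ℤ)) - 1) ≤ (n : ℤ) :=
  star_caterpillar_arith_general n n2 k h hwhite
end

section
/- Let S be a planar point set partitioned into two chains C₁ (convex chain, all points colored black) and C₂ (concave chain, all points colored white), where every point of C₂ lies strictly below every line through two points of C₁ and every point of C₁ lies strictly above every line through two points of C₂. Then any straight-line plane embedding on S of a properly 2-colored graph G (black vertices to C₁, white vertices to C₂) implies G is acyclic. -/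
/-!
Take a black vertex `u` of a cycle whose image is leftmost among the black vertices of the cycle,
its two (white) cycle-neighbours `v`, `v'` with `v` left of `v'`, and the second cycle-neighbour
`u₂ ≠ u` of `v`, which is black and to the right of `u`. Since the white chain lies below the
line `u u₂` and the black chain above the line `v v'`, the edges `u v'` and `u₂ v` cross.
-/

/-- Orientation determinant of the triple `(p, q, r)`: positive iff `r` lies strictly
to the left of the directed line `p → q` (i.e. strictly above it when `p.1 < q.1`). -/
def orient (p q r : ℝ × ℝ) : ℝ :=
  (q.1 - p.1) * (r.2 - p.2) - (q.2 - p.2) * (r.1 - p.1)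

lemma orient_rotate (p q r : ℝ × ℝ) : orient p q r = orient q r p := by
  unfold orient; ring

lemma orient_swap (p q r : ℝ × ℝ) : orient p q r = -orient p r q := by
  unfold orient; ring

theorem segment_inter_nonempty_of_orient {p q r s : ℝ × ℝ}
    (hp : orient r s p < 0) (hq : 0 < orient r s q)
    (hr : 0 < orient p q r) (hs : orient p q s < 0) :
    (segment ℝ p q ∩ segment ℝ r s).Nonempty := by
  have hpq : orient r s p - orient r s q < 0 := by linarith
  have hrs : 0 < orient p q r - orient p q s := by linarith
  -- `orient r s` is affine, so it vanishes at the point of parameter `t` on `[p, q]`.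
  set t := orient r s p / (orient r s p - orient r s q) with ht
  set t' := orient p q r / (orient p q r - orient p q s) with ht'
  have ht₀ : 0 < t := div_pos_of_neg_of_neg hp hpq
  have ht₁ : t < 1 := by rw [ht, div_lt_one_of_neg hpq]; linarith
  have ht'₀ : 0 < t' := div_pos hr hrs
  have ht'₁ : t' < 1 := by rw [ht', div_lt_one hrs]; linarith
  refine ⟨(1 - t) • p + t • q, ⟨1 - t, t, by linarith, ht₀.le, by ring, rfl⟩,
    ⟨1 - t', t', by linarith, ht'₀.le, by ring, ?_⟩⟩
  have hpq₀ := hpq.ne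
  have hrs₀ := hrs.ne'
  obtain ⟨p₁, p₂⟩ := p
  obtain ⟨q₁, q₂⟩ := q
  obtain ⟨r₁, r₂⟩ := r
  obtain ⟨s₁, s₂⟩ := s
  simp only [ht, ht', orient, Prod.smul_mk, smul_eq_mul, Prod.mk_add_mk, Prod.mk.injEq] at *
  constructor <;> field_simp <;> ring

theorem segment_inter_nonempty_of_separated {a a' b b' : ℝ × ℝ}
    (hb : orient a a' b < 0) (hb' : orient a a' b' < 0)
    (ha : 0 < orient b b' a) (ha' : 0 < orient b b' a') :
    (segment ℝ a b' ∩ segment ℝ a' b).Nonempty := by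
  refine segment_inter_nonempty_of_orient ?_ ?_ ?_ ?_
  · rwa [orient_rotate, orient_rotate]
  · rwa [orient_rotate]
  · rw [orient_swap]; linarith
  · rw [orient_rotate, orient_rotate, orient_swap]; linarith

namespace SimpleGraph

variable {V : Type*} {G : SimpleGraph V} {C₁ C₂ : Finset (ℝ × ℝ)} {c : V → Bool}
  {f : V → ℝ × ℝ}

lemma not_adj_and_adj_of_fst_lt
    (hbelow : ∀ p ∈ C₁, ∀ q ∈ C₁, p.1 < q.1 → ∀ r ∈ C₂, orient p q r < 0)
    (habove : ∀ p ∈ C₂, ∀ q ∈ C₂, p.1 < q.1 → ∀ r ∈ C₁, 0 < orient p q r)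
    (hmap₁ : ∀ v, c v = true → f v ∈ C₁) (hmap₂ : ∀ v, c v = false → f v ∈ C₂)
    (hnc : ∀ u v x y : V, G.Adj u v → G.Adj x y → u ≠ x → u ≠ y → v ≠ x → v ≠ y →
      segment ℝ (f u) (f v) ∩ segment ℝ (f x) (f y) = ∅)
    {u u₂ v v' : V} (hu : c u = true) (hu₂ : c u₂ = true) (hv : c v = false)
    (hv' : c v' = false) (huu₂ : u ≠ u₂) (hvv' : v ≠ v')
    (hlt : (f u).1 < (f u₂).1) (hlt' : (f v).1 < (f v').1) :
    ¬ (G.Adj u v' ∧ G.Adj u₂ v) := by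
  rintro ⟨huv', hu₂v⟩
  have hcross := segment_inter_nonempty_of_separated
    (hbelow _ (hmap₁ u hu) _ (hmap₁ u₂ hu₂) hlt _ (hmap₂ v hv))
    (hbelow _ (hmap₁ u hu) _ (hmap₁ u₂ hu₂) hlt _ (hmap₂ v' hv'))
    (habove _ (hmap₂ v hv) _ (hmap₂ v' hv') hlt' _ (hmap₁ u hu))
    (habove _ (hmap₂ v hv) _ (hmap₂ v' hv') hlt' _ (hmap₁ u₂ hu₂))
  rw [hnc u v' u₂ v huv' hu₂v huu₂ (by grind) (by grind) hvv'.symm] at hcross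
  exact Set.not_nonempty_empty hcross

theorem IsCycles.not_adj_of_double_chain_embedding (hcyc : G.IsCycles)
    (hx₁ : ∀ p ∈ C₁, ∀ q ∈ C₁, p ≠ q → p.1 ≠ q.1)
    (hx₂ : ∀ p ∈ C₂, ∀ q ∈ C₂, p ≠ q → p.1 ≠ q.1)
    (hbelow : ∀ p ∈ C₁, ∀ q ∈ C₁, p.1 < q.1 → ∀ r ∈ C₂, orient p q r < 0)
    (habove : ∀ p ∈ C₂, ∀ q ∈ C₂, p.1 < q.1 → ∀ r ∈ C₁, 0 < orient p q r)
    (hproper : ∀ u v, G.Adj u v → c u ≠ c v) (hinj : Function.Injective f)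
    (hmap₁ : ∀ v, c v = true → f v ∈ C₁) (hmap₂ : ∀ v, c v = false → f v ∈ C₂)
    (hnc : ∀ u v x y : V, G.Adj u v → G.Adj x y → u ≠ x → u ≠ y → v ≠ x → v ≠ y →
      segment ℝ (f u) (f v) ∩ segment ℝ (f x) (f y) = ∅)
    (a b : V) : ¬ G.Adj a b := by
  intro hab
  have white_of_adj {u w : V} (hu : c u = true) (huw : G.Adj u w) : c w = false := by
    simpa [hu] using (hproper u w huw).symm
  set S : Set V := {w | c w = true ∧ ∃ x, G.Adj w x}
  have hS : S.Finite :=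
    (C₁.finite_toSet.preimage hinj.injOn).subset fun w hw ↦ hmap₁ w hw.1
  have hSne : S.Nonempty := by
    cases ha : c a
    · exact ⟨b, by simpa [ha] using (hproper a b hab).symm, a, hab.symm⟩
    · exact ⟨a, ha, b, hab⟩
  obtain ⟨u, ⟨hu, v, huv⟩, hmin⟩ := S.exists_min_image (fun w ↦ (f w).1) hS hSne
  obtain ⟨v', hvv', huv'⟩ := hcyc.other_adj_of_adj huv
  wlog hlt' : (f v).1 < (f v').1 generalizing v v'
  · refine this v' huv' v hvv'.symm huv ((lt_or_gt_of_ne ?_).resolve_left hlt')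
    exact hx₂ _ (hmap₂ v (white_of_adj hu huv)) _ (hmap₂ v' (white_of_adj hu huv'))
      (hinj.ne hvv')
  obtain ⟨u₂, hu₂u, hvu₂⟩ := hcyc.other_adj_of_adj huv.symm
  have hv := white_of_adj hu huv
  have hu₂ : c u₂ = true := by simpa [hv] using (hproper v u₂ hvu₂).symm
  have hlt : (f u).1 < (f u₂).1 :=
    (hmin u₂ ⟨hu₂, v, hvu₂.symm⟩).lt_of_ne
      (hx₁ _ (hmap₁ u hu) _ (hmap₁ u₂ hu₂) (hinj.ne hu₂u))
  exact not_adj_and_adj_of_fst_lt hbelow habove hmap₁ hmap₂ hnc hu hu₂ hv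
    (white_of_adj hu huv') hu₂u hvv' hlt hlt' ⟨huv', hvu₂.symm⟩

end SimpleGraph

theorem double_chain_monochromatic_acyclic_general {V : Type*} (G : SimpleGraph V)
    (C₁ C₂ : Finset (ℝ × ℝ))
    (hx₁ : ∀ p ∈ C₁, ∀ q ∈ C₁, p ≠ q → p.1 ≠ q.1)
    (hx₂ : ∀ p ∈ C₂, ∀ q ∈ C₂, p ≠ q → p.1 ≠ q.1)
    (hbelow : ∀ p ∈ C₁, ∀ q ∈ C₁, p.1 < q.1 → ∀ r ∈ C₂, orient p q r < 0)
    (habove : ∀ p ∈ C₂, ∀ q ∈ C₂, p.1 < q.1 → ∀ r ∈ C₁, 0 < orient p q r)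
    (c : V → Bool) (hproper : ∀ u v, G.Adj u v → c u ≠ c v)
    (f : V → ℝ × ℝ) (hinj : Function.Injective f)
    (hmap₁ : ∀ v, c v = true → f v ∈ C₁) (hmap₂ : ∀ v, c v = false → f v ∈ C₂)
    (hnc : ∀ u v x y : V, G.Adj u v → G.Adj x y → u ≠ x → u ≠ y → v ≠ x → v ≠ y →
      segment ℝ (f u) (f v) ∩ segment ℝ (f x) (f y) = ∅) :
    G.IsAcyclic := by
  intro v₀ p hp
  have hle := p.toSubgraph.spanningCoe_le
  exact hp.isCycles_spanningCoe_toSubgraph.not_adj_of_double_chain_embedding hx₁ hx₂ hbelow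
    habove (fun u v h ↦ hproper u v (hle h)) hinj hmap₁ hmap₂
    (fun u v x y h h' ↦ hnc u v x y (hle h) (hle h')) v₀ p.snd
    (p.toSubgraph_adj_snd hp.not_nil)

/-- Let `(C₁, C₂)` be a double-chain: `C₁` a convex chain (points with
distinct x-coordinates turning left), `C₂` a concave chain, every point of `C₂`
strictly below every line through two points of `C₁`, and every point of `C₁` strictly
above every line through two points of `C₂`. If a graph `G` with a proper 2-coloring
`c` is embedded by straight-line segments without crossings, black vertices mapped
injectively into `C₁` and white vertices into `C₂`, then `G` is acyclic. -/
theorem double_chain_monochromatic_acyclic {V : Type*} (G : SimpleGraph V)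
    (C₁ C₂ : Finset (ℝ × ℝ))
    (hx₁ : ∀ p ∈ C₁, ∀ q ∈ C₁, p ≠ q → p.1 ≠ q.1)
    (hx₂ : ∀ p ∈ C₂, ∀ q ∈ C₂, p ≠ q → p.1 ≠ q.1)
    (hconv : ∀ p ∈ C₁, ∀ q ∈ C₁, ∀ r ∈ C₁,
      p.1 < q.1 → q.1 < r.1 → 0 < orient p q r)
    (hconc : ∀ p ∈ C₂, ∀ q ∈ C₂, ∀ r ∈ C₂,
      p.1 < q.1 → q.1 < r.1 → orient p q r < 0)
    (hbelow : ∀ p ∈ C₁, ∀ q ∈ C₁, p.1 < q.1 → ∀ r ∈ C₂, orient p q r < 0)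
    (habove : ∀ p ∈ C₂, ∀ q ∈ C₂, p.1 < q.1 → ∀ r ∈ C₁, 0 < orient p q r)
    (c : V → Bool) (hproper : ∀ u v, G.Adj u v → c u ≠ c v)
    (f : V → ℝ × ℝ) (hinj : Function.Injective f)
    (hmap₁ : ∀ v, c v = true → f v ∈ C₁) (hmap₂ : ∀ v, c v = false → f v ∈ C₂)
    (hnc : ∀ u v x y : V, G.Adj u v → G.Adj x y → u ≠ x → u ≠ y → v ≠ x → v ≠ y →
      segment ℝ (f u) (f v) ∩ segment ℝ (f x) (f y) = ∅) :
    G.IsAcyclic :=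
  double_chain_monochromatic_acyclic_general G C₁ C₂ hx₁ hx₂ hbelow habove c hproper f hinj hmap₁
    hmap₂ hnc
end

section
/- Let t ≥ 1 paths partition the points of a cyclically ordered point set C (points on a circle), each path spanning a union of maximal arcs (bases). For each non-leaf path P_i (a path with b(P_i) ≥ 2 bases), shrink bases and count nested leaves as in interval nesting: then the number of leaves (paths with exactly one base) satisfies #leaves ≥ Σ_{P_i non-leaf} (b(P_i) − 2) + 2, provided the paths are pairwise non-crossing and cover at least 4 runs of the cyclic coloring. -/
/-- The number of bases (maximal cyclic arcs) of a set `S` of points on the cyclically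
ordered circle `ZMod n`: the number of points of `S` whose cyclic predecessor is not
in `S`. -/
def nBases {n : ℕ} [NeZero n] (S : Finset (ZMod n)) : ℕ :=
  (S.filter (fun x => x - 1 ∉ S)).card

/-- Two point sets on the circle `ZMod n` cross (interleave): there are `a, x ∈ S` and
`b, y ∈ T` appearing in the cyclic order `a, b, x, y`. -/
def Crosses {n : ℕ} [NeZero n] (S T : Finset (ZMod n)) : Prop :=
  ∃ a ∈ S, ∃ b ∈ T, ∃ x ∈ S, ∃ y ∈ T,
    0 < (b - a).val ∧ (b - a).val < (x - a).val ∧ (x - a).val < (y - a).val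

/-!
Colour each point of the circle by the path containing it. Reading the colours of the maximal
runs once around the circle, starting at the first point of a run, gives a word of length
`∑ b(Pᵢ)` in which adjacent letters differ, the first and last letters differ, and no
subsequence `a b a b` with `a ≠ b` occurs, since that would be a crossing. Closing such a word
up with its first letter preserves these properties, and a linear word with them on `k`
letters has length at most `2k - 1`: split it at the second occurrence of its first letter into
two such words on disjoint alphabets. Hence `∑ b(Pᵢ) + 2 ≤ 2 · #{i | b(Pᵢ) ≥ 1}`, which
rearranges to the claim.
-/

namespace List
variable {α : Type*}

def HasABAB (l : List α) : Prop := ∃ x y, x ≠ y ∧ [x, y, x, y] <+ l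

theorem HasABAB.mono {l₁ l₂ : List α} (h : l₁ <+ l₂) : HasABAB l₁ → HasABAB l₂ :=
  fun ⟨x, y, hxy, hs⟩ => ⟨x, y, hxy, hs.trans h⟩

variable [DecidableEq α]

theorem length_lt_two_mul_card_toFinset_of_not_hasABAB {l : List α} (hne : l ≠ [])
    (hchain : l.IsChain (· ≠ ·)) (habab : ¬ HasABAB l) : l.length < 2 * l.toFinset.card := by
  induction hn : l.length using Nat.strong_induction_on generalizing l with
  | _ n ih =>
    subst hn
    obtain ⟨a, l, rfl⟩ := exists_cons_of_ne_nil hne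
    by_cases ha : a ∈ l
    · obtain ⟨u, v, rfl, hau⟩ := eq_append_cons_of_mem ha
      have hu : u ≠ [] := by
        rintro rfl
        simp at hchain
      have hdisj : _root_.Disjoint u.toFinset (a :: v).toFinset := by
        refine Finset.disjoint_left.mpr fun b hbu hbv => ?_
        rw [mem_toFinset] at hbu hbv
        have hba : b ≠ a := fun h => hau (h ▸ hbu)
        have hbv' : b ∈ v := (mem_cons.mp hbv).resolve_left hba
        exact habab ⟨a, b, hba.symm, ((singleton_sublist.mpr hbu).append
          ((singleton_sublist.mpr hbv').cons_cons a)).cons_cons a⟩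
      have ihu := ih u.length (by simp) hu (hchain.infix ⟨[a], a :: v, rfl⟩)
        (fun h => habab (h.mono ((sublist_append_left u _).cons a))) rfl
      have ihv := ih (a :: v).length (by simp) (cons_ne_nil _ _)
        (hchain.infix ⟨a :: u, [], by simp⟩)
        (fun h => habab (h.mono ((sublist_append_right u _).cons a))) rfl
      have hcard : (a :: (u ++ a :: v)).toFinset = u.toFinset ∪ (a :: v).toFinset := by
        ext; simp
      rw [hcard, Finset.card_union_of_disjoint hdisj]
      simp only [length_cons, length_append] at ihv ⊢
      omega
    · rw [toFinset_cons, Finset.card_insert_of_notMem (by simpa using ha), length_cons]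
      rcases eq_or_ne l [] with rfl | hl
      · simp
      · have := ih l.length (by simp) hl hchain.tail
          (fun h => habab (h.mono (sublist_cons_self a l))) rfl
        omega

theorem length_add_two_le_two_mul_card_toFinset_of_not_hasABAB {l : List α}
    (hchain : l.IsChain (· ≠ ·)) (habab : ¬ HasABAB l) (hends : l.head? ≠ l.getLast?) :
    l.length + 2 ≤ 2 * l.toFinset.card := by
  obtain ⟨a, l', rfl⟩ := exists_cons_of_ne_nil (l := l) (by rintro rfl; simp at hends)
  have hlast : (a :: l').getLast (cons_ne_nil _ _) ≠ a := by
    simpa [getLast?_eq_some_getLast, eq_comm] using hends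
  have hclosed := length_lt_two_mul_card_toFinset_of_not_hasABAB (l := a :: l' ++ [a]) (by simp)
    (hchain.append (by simp) (by simpa [getLast?_eq_some_getLast] using hlast))
    (by
      rintro ⟨x, y, hxy, hs⟩
      obtain ⟨l₁, l₂, hsplit, hs₁, hs₂⟩ := sublist_append_iff.mp hs
      rcases sublist_singleton.mp hs₂ with rfl | rfl
      · rw [append_nil] at hsplit
        exact habab ⟨x, y, hxy, hsplit ▸ hs₁⟩
      · -- the pattern ends with the appended `a`, so `a x a x` already occurs in `a :: l'`
        obtain ⟨rfl, rfl⟩ : l₁ = [x, y, x] ∧ y = a := by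
          have := append_inj' (s₁ := [x, y, x]) hsplit rfl
          simpa [eq_comm] using this
        have hs' : [x, y, x] <+ l' := by
          rcases sublist_cons_iff.mp hs₁ with h | ⟨r, hr, _⟩
          · exact h
          · exact absurd (cons.inj hr).1 hxy
        exact habab ⟨y, x, hxy.symm, hs'.cons_cons y⟩)
  have hfin : (a :: l' ++ [a]).toFinset = (a :: l').toFinset := by
    ext; simp
  rw [hfin, length_append] at hclosed
  exact hclosed

end List

section RunWord
open List
variable {ι : Type*} [DecidableEq ι]

def runWord (g : ℕ → ι) (m : ℕ) : List ι :=
  ((List.range m).filter fun k => k = 0 ∨ g k ≠ g (k - 1)).map g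

theorem runWord_zero (g : ℕ → ι) : runWord g 0 = [] := rfl

theorem runWord_succ (g : ℕ → ι) (m : ℕ) :
    runWord g (m + 1) = runWord g m ++ if m = 0 ∨ g m ≠ g (m - 1) then [g m] else [] := by
  unfold runWord
  rw [List.range_succ, List.filter_append, List.map_append]
  split_ifs with h <;> simp [h]

theorem head?_runWord_succ (g : ℕ → ι) : ∀ m, (runWord g (m + 1)).head? = some (g 0)
  | 0 => by simp [runWord_succ, runWord_zero]
  | m + 1 => by rw [runWord_succ, head?_append, head?_runWord_succ g m, Option.some_or]

theorem getLast?_runWord_succ (g : ℕ → ι) : ∀ m, (runWord g (m + 1)).getLast? = some (g m)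
  | 0 => by simp [runWord_succ, runWord_zero]
  | m + 1 => by
    by_cases h : g (m + 1) = g m
    · rw [runWord_succ, if_neg (by simpa using h), append_nil, getLast?_runWord_succ g m, h]
    · rw [runWord_succ, if_pos (by simpa using h)]
      simp

theorem isChain_runWord (g : ℕ → ι) : ∀ m, (runWord g m).IsChain (· ≠ ·)
  | 0 => by simp [runWord_zero]
  | m + 1 => by
    rw [runWord_succ]
    split_ifs with h
    · refine (isChain_runWord g m).append (by simp) fun x hx y hy => ?_
      cases m with
      | zero => simp [runWord_zero] at hx
      | succ m =>
        rw [getLast?_runWord_succ, Option.mem_some_iff] at hx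
        rw [head?_cons, Option.mem_some_iff] at hy
        subst hx hy
        exact (h.resolve_left (Nat.add_one_ne_zero m)).symm
    · simpa using isChain_runWord g m

theorem exists_lt_of_hasABAB_runWord {g : ℕ → ι} {m : ℕ} (h : HasABAB (runWord g m)) :
    ∃ k₁ k₂ k₃ k₄, k₁ < k₂ ∧ k₂ < k₃ ∧ k₃ < k₄ ∧ k₄ < m ∧
      g k₁ ≠ g k₂ ∧ g k₃ = g k₁ ∧ g k₄ = g k₂ := by
  obtain ⟨x, y, hxy, hs⟩ := h
  obtain ⟨l, hl, hmap⟩ := sublist_map_iff.mp (hs.trans (filter_sublist.map g))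
  obtain ⟨k₁, k₂, k₃, k₄, rfl⟩ : ∃ k₁ k₂ k₃ k₄, l = [k₁, k₂, k₃, k₄] := by
    match l, congrArg length hmap with
    | [k₁, k₂, k₃, k₄], _ => exact ⟨k₁, k₂, k₃, k₄, rfl⟩
  simp only [map_cons, map_nil, cons.injEq] at hmap
  obtain ⟨rfl, rfl, h₃, h₄, -⟩ := hmap
  have hsorted := pairwise_lt_range.sublist hl
  simp only [pairwise_cons, mem_cons, forall_eq_or_imp] at hsorted
  have hk₄ : k₄ < m := mem_range.mp (hl.subset (by simp))
  exact ⟨k₁, k₂, k₃, k₄, hsorted.1.1, hsorted.2.1.1, hsorted.2.2.1.1, hk₄, hxy, h₃.symm,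
    h₄.symm⟩

end RunWord

open Finset

theorem ZMod.val_add_natCast_sub_add_natCast {n : ℕ} (z : ZMod n) {k l : ℕ} (hkl : k ≤ l)
    (hl : l < n) : ((z + l) - (z + k)).val = l - k := by
  rw [add_sub_add_left_eq_sub, ← Nat.cast_sub hkl, ZMod.val_cast_of_lt (by omega)]

section CircleColouring
variable {n : ℕ} [NeZero n] {ι : Type*} [DecidableEq ι]

def runStarts (f : ZMod n → ι) : Finset (ZMod n) := univ.filter fun x => f x ≠ f (x - 1)

theorem exists_mem_runStarts {f : ZMod n → ι} (hf : ∃ x y, f x ≠ f y) :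
    ∃ z, z ∈ runStarts f := by
  by_contra! h
  simp only [runStarts, mem_filter, mem_univ, true_and, not_not] at h
  have hconst : ∀ k : ℕ, f k = f 0 := by
    intro k
    induction k with
    | zero => simp
    | succ k ih => rw [← ih, h, Nat.cast_succ, add_sub_cancel_right]
  obtain ⟨x, y, hxy⟩ := hf
  rw [← ZMod.natCast_zmod_val x, ← ZMod.natCast_zmod_val y, hconst, hconst] at hxy
  exact hxy rfl

theorem nBases_fiber_eq_card_runStarts (f : ZMod n → ι) (i : ι) :
    nBases ({x | f x = i} : Finset (ZMod n)) = #{x ∈ runStarts f | f x = i} := by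
  unfold nBases runStarts
  congr 1
  ext x
  simp only [mem_filter, mem_univ, true_and]
  constructor
  · rintro ⟨rfl, h⟩
    exact ⟨Ne.symm h, rfl⟩
  · rintro ⟨h, rfl⟩
    exact ⟨rfl, Ne.symm h⟩

theorem sum_nBases_fiber_eq_card_runStarts [Fintype ι] (f : ZMod n → ι) :
    ∑ i, nBases ({x | f x = i} : Finset (ZMod n)) = #(runStarts f) := by
  simp_rw [nBases_fiber_eq_card_runStarts]
  exact (card_eq_sum_card_fiberwise fun x _ => mem_univ (f x)).symm

def circleRunWord (f : ZMod n → ι) (z : ZMod n) : List ι := runWord (fun k : ℕ => f (z + k)) n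

variable {f : ZMod n → ι} {z : ZMod n}

theorem add_natCast_mem_runStarts_iff (hz : z ∈ runStarts f) (k : ℕ) :
    z + k ∈ runStarts f ↔ k = 0 ∨ f (z + k) ≠ f (z + ↑(k - 1)) := by
  rcases Nat.eq_zero_or_pos k with rfl | hk
  · simpa using hz
  · simp [runStarts, Nat.cast_sub hk, hk.ne', add_sub_assoc]

theorem length_circleRunWord (hz : z ∈ runStarts f) :
    (circleRunWord f z).length = #(runStarts f) := by
  rw [circleRunWord, runWord, List.length_map,
    ← List.toFinset_card_of_nodup (List.nodup_range.filter _), List.toFinset_filter,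
    List.toFinset_range]
  simp only [decide_eq_true_eq]
  refine card_nbij' (fun k => z + k) (fun x => (x - z).val) (fun k hk => ?_) (fun x _ => ?_)
    (fun k hk => ?_) (fun x _ => ?_)
  · rw [coe_filter] at hk
    exact (add_natCast_mem_runStarts_iff hz k).mpr hk.2
  · rw [coe_filter]
    refine ⟨mem_range.mpr (ZMod.val_lt _), (add_natCast_mem_runStarts_iff hz _).mp ?_⟩
    simpa using ‹x ∈ _›
  · rw [coe_filter] at hk
    simpa using ZMod.val_cast_of_lt (mem_range.mp hk.1)
  · simp

theorem head?_ne_getLast?_circleRunWord (hz : z ∈ runStarts f) :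
    (circleRunWord f z).head? ≠ (circleRunWord f z).getLast? := by
  obtain ⟨m, rfl⟩ := Nat.exists_eq_succ_of_ne_zero (NeZero.ne n)
  rw [circleRunWord, head?_runWord_succ, getLast?_runWord_succ]
  have hm : (m : ZMod (m + 1)) = -1 :=
    eq_neg_of_add_eq_zero_left (by exact_mod_cast ZMod.natCast_self (m + 1))
  simpa [runStarts, hm, sub_eq_add_neg] using hz

theorem not_hasABAB_circleRunWord
    (hnc : ∀ i j, i ≠ j → ¬ Crosses ({x | f x = i} : Finset _) {x | f x = j}) :
    ¬ List.HasABAB (circleRunWord f z) := by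
  intro h
  obtain ⟨k₁, k₂, k₃, k₄, h₁₂, h₂₃, h₃₄, h₄, hne, h₃, h₄'⟩ := exists_lt_of_hasABAB_runWord h
  refine hnc _ _ hne ⟨z + k₁, by simp, z + k₂, by simp, z + k₃, by simpa using h₃,
    z + k₄, by simpa using h₄', ?_⟩
  rw [ZMod.val_add_natCast_sub_add_natCast z h₁₂.le (by omega),
    ZMod.val_add_natCast_sub_add_natCast z (h₁₂.trans h₂₃).le (by omega),
    ZMod.val_add_natCast_sub_add_natCast z (h₁₂.trans (h₂₃.trans h₃₄)).le h₄]
  omega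

theorem sum_nBases_fiber_add_two_le [Fintype ι] (hf : ∃ x y, f x ≠ f y)
    (hnc : ∀ i j, i ≠ j → ¬ Crosses ({x | f x = i} : Finset _) {x | f x = j}) :
    ∑ i, nBases ({x | f x = i} : Finset (ZMod n)) + 2
      ≤ 2 * #{i | nBases ({x | f x = i} : Finset (ZMod n)) ≠ 0} := by
  obtain ⟨z, hz⟩ := exists_mem_runStarts hf
  have hletters : (circleRunWord f z).toFinset
      ⊆ ({i | nBases ({x | f x = i} : Finset (ZMod n)) ≠ 0} : Finset ι) := by
    intro i hi
    obtain ⟨k, hk, rfl⟩ := List.mem_map.mp (List.mem_toFinset.mp hi)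
    rw [List.mem_filter, decide_eq_true_eq] at hk
    rw [mem_filter, nBases_fiber_eq_card_runStarts, ← pos_iff_ne_zero, card_pos]
    exact ⟨mem_univ _, z + k,
      mem_filter.mpr ⟨(add_natCast_mem_runStarts_iff hz k).mpr hk.2, rfl⟩⟩
  calc ∑ i, nBases ({x | f x = i} : Finset (ZMod n)) + 2
      = (circleRunWord f z).length + 2 := by
        rw [sum_nBases_fiber_eq_card_runStarts, length_circleRunWord hz]
    _ ≤ 2 * (circleRunWord f z).toFinset.card :=
        List.length_add_two_le_two_mul_card_toFinset_of_not_hasABAB (isChain_runWord _ _)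
          (not_hasABAB_circleRunWord hnc) (head?_ne_getLast?_circleRunWord hz)
    _ ≤ _ := by gcongr

end CircleColouring

theorem sum_sub_two_add_two_le_card_eq_one {ι : Type*} {s : Finset ι} (b : ι → ℕ)
    (h : ∑ i ∈ s, b i + 2 ≤ 2 * #{i ∈ s | b i ≠ 0}) :
    ∑ i ∈ s with 2 ≤ b i, (b i - 2) + 2 ≤ #{i ∈ s | b i = 1} := by
  have hsplit := sum_filter_add_sum_filter_not s (fun i => b i = 1) b
  have hleaves : ∑ i ∈ s with b i = 1, b i = #{i ∈ s | b i = 1} := by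
    rw [card_eq_sum_ones]; exact sum_congr rfl fun i hi => (mem_filter.mp hi).2
  have hbig : ∑ i ∈ s with 2 ≤ b i, b i
      = ∑ i ∈ s with 2 ≤ b i, (b i - 2) + 2 * #{i ∈ s | 2 ≤ b i} := by
    rw [card_eq_sum_ones, mul_sum, ← sum_add_distrib]
    exact sum_congr rfl fun i hi => by have := (mem_filter.mp hi).2; omega
  have hsub : ∑ i ∈ s with 2 ≤ b i, b i ≤ ∑ i ∈ s with ¬ b i = 1, b i :=
    sum_le_sum_of_subset (monotone_filter_right s fun i h => by omega)
  have hcard : #{i ∈ s | b i ≠ 0} ≤ #{i ∈ s | b i = 1} + #{i ∈ s | 2 ≤ b i} := by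
    classical
    refine (card_le_card fun i hi => ?_).trans (card_union_le _ _)
    obtain ⟨his, hb⟩ := mem_filter.mp hi
    rcases (by omega : b i = 1 ∨ 2 ≤ b i) with h | h
    · exact mem_union_left _ (mem_filter.mpr ⟨his, h⟩)
    · exact mem_union_right _ (mem_filter.mpr ⟨his, h⟩)
  omega

theorem Finset.exists_eq_filter_of_pairwise_disjoint {α ι : Type*} [Fintype α] [DecidableEq ι]
    {S : ι → Finset α} (hdisj : ∀ i j, i ≠ j → Disjoint (S i) (S j))
    (hcover : ∀ x, ∃ i, x ∈ S i) :
    ∃ f : α → ι, S = fun i => ({x | f x = i} : Finset α) := by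
  choose f hf using hcover
  refine ⟨f, funext fun i => ext fun x => ?_⟩
  rw [mem_filter, and_iff_right (mem_univ x)]
  refine ⟨fun hx => ?_, fun h => h ▸ hf x⟩
  by_contra hne
  exact disjoint_left.mp (hdisj _ _ hne) (hf x) hx

theorem leaves_lower_bound_general (n : ℕ) [NeZero n] (t : ℕ)
    (S : Fin t → Finset (ZMod n))
    (hnotall : ∀ i, S i ≠ Finset.univ)
    (hdisj : ∀ i j, i ≠ j → Disjoint (S i) (S j))
    (hcover : ∀ x : ZMod n, ∃ i, x ∈ S i)
    (hnc : ∀ i j, i ≠ j → ¬ Crosses (S i) (S j)) :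
    (∑ i ∈ Finset.univ.filter (fun i => 2 ≤ nBases (S i)), (nBases (S i) - 2)) + 2
      ≤ (Finset.univ.filter (fun i => nBases (S i) = 1)).card := by
  obtain ⟨f, rfl⟩ := Finset.exists_eq_filter_of_pairwise_disjoint hdisj hcover
  have hf : ∃ x y, f x ≠ f y := by
    by_contra! hconst
    exact hnotall (f 0) (Finset.eq_univ_of_forall fun y => by simpa using hconst y 0)
  exact sum_sub_two_add_two_le_card_eq_one _ (sum_nBases_fiber_add_two_le hf hnc)

/-- Let `t` pairwise non-crossing paths partition a cyclically 2-colored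
point set on a circle with at least 4 runs; the point set of path `i` is `S i`, its
bases are its maximal cyclic arcs, and no single path spans the whole circle (as the
paths are alternating and there are at least 4 runs). A leaf is a path with exactly
one base. Then `#leaves ≥ Σ_{non-leaf i} (b(Pᵢ) - 2) + 2`. -/
theorem leaves_lower_bound (n : ℕ) [NeZero n] (t : ℕ)
    (S : Fin t → Finset (ZMod n)) (c : ZMod n → Bool)
    (hruns : 4 ≤ (Finset.univ.filter (fun i : ZMod n => c i ≠ c (i + 1))).card)
    (hne : ∀ i, (S i).Nonempty)
    (hnotall : ∀ i, S i ≠ Finset.univ)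
    (hdisj : ∀ i j, i ≠ j → Disjoint (S i) (S j))
    (hcover : ∀ x : ZMod n, ∃ i, x ∈ S i)
    (hnc : ∀ i j, i ≠ j → ¬ Crosses (S i) (S j)) :
    (∑ i ∈ Finset.univ.filter (fun i => 2 ≤ nBases (S i)), (nBases (S i) - 2)) + 2
      ≤ (Finset.univ.filter (fun i => nBases (S i) = 1)).card :=
  leaves_lower_bound_general n t S hnotall hdisj hcover hnc
end

section
/- Performing a contraction on a 2-colored linearly ordered point set — removing a singleton (a point whose two neighbors have the opposite color) together with both its neighbors, and replacing them by one point of the neighbors' color — decreases the number of runs of the singleton's color by one, and preserves the difference between the number of points of the two colors. -/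
/-!
Write `C = A ++ [!c, c, !c] ++ B`, where `c` is the singleton's color. The contraction turns this
into `A ++ [!c] ++ B`, i.e. it deletes the adjacent pair `c, !c`: one point of each color, and the
singleton is a run of its own, while every other point keeps its left neighbor's color.
-/

/-- The number of runs of color `col` in the chain `C`: the number of positions where
a maximal interval of `col`-colored points starts. -/
def countRunsOf (col : Bool) (C : List Bool) : ℕ :=
  ((List.range C.length).filter
    (fun i => decide (C.getD i (!col) = col ∧ (i = 0 ∨ C.getD (i - 1) (!col) ≠ col)))).length

/-- The number of runs of color `col` in `l` when `l` is preceded by a point of color `prev`. -/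
def countRunsAfter (col : Bool) : Bool → List Bool → ℕ
  | _, [] => 0
  | prev, a :: l => (if a = col ∧ prev ≠ col then 1 else 0) + countRunsAfter col a l

lemma length_filter_runStart_eq_countRunsAfter (col : Bool) (l : List Bool) (prev : Bool) :
    ((List.range l.length).filter
      (fun i => decide (l.getD i (!col) = col ∧ (prev :: l).getD i (!col) ≠ col))).length
      = countRunsAfter col prev l := by
  induction l generalizing prev with
  | nil => rfl
  | cons a l ih =>
    rw [List.length_cons, List.range_succ_eq_map, List.filter_cons, List.filter_map,
      countRunsAfter, ← ih a]
    simp only [Function.comp_def, List.getD_cons_zero, List.getD_cons_succ]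
    split <;> simp_all [Nat.add_comm]

/-- A virtual point of color `!col` in front of `C` accounts for the clause `i = 0`. -/
lemma countRunsOf_eq_countRunsAfter (col : Bool) (C : List Bool) :
    countRunsOf col C = countRunsAfter col (!col) C := by
  rw [← length_filter_runStart_eq_countRunsAfter, countRunsOf]
  congr 1
  refine List.filter_congr fun i _ => ?_
  rcases i with _ | j <;> simp

lemma countRunsAfter_append_singleton_run (col prev : Bool) (A B : List Bool) :
    countRunsAfter col prev (A ++ (!col) :: col :: (!col) :: B)
      = countRunsAfter col prev (A ++ (!col) :: B) + 1 := by
  induction A generalizing prev with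
  | nil => simp [countRunsAfter]; omega
  | cons a A ih => simp [countRunsAfter, ih a]; omega

lemma List.count_not_cons_cons (b x : Bool) (l : List Bool) :
    ((!x) :: x :: l).count b = l.count b + 1 := by
  cases b <;> cases x <;> simp

lemma List.eq_take_append_getD_cons_cons_cons {α : Type*} (l : List α) (d : α) {i : ℕ}
    (hi : i + 2 < l.length) :
    l = l.take i ++ l.getD i d :: l.getD (i + 1) d :: l.getD (i + 2) d :: l.drop (i + 3) := by
  conv_lhs => rw [← List.take_append_drop i l]
  rw [List.drop_eq_getElem_cons (by omega), List.drop_eq_getElem_cons (by omega),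
    List.drop_eq_getElem_cons hi]
  simp [hi, Nat.lt_of_succ_lt hi, Nat.lt_of_succ_lt (Nat.lt_of_succ_lt hi)]

/-- A contraction of a 2-colored chain removes a singleton (an inner
point at position `p` whose two neighbors both have the opposite color) together with
both its neighbors and replaces them by one point of the neighbors' color. This
decreases the number of runs of the singleton's color by one and preserves the
difference between the numbers of points of the two colors. -/
theorem contraction_runs_and_balance (C : List Bool) (p : ℕ)
    (hp : 1 ≤ p) (hp2 : p + 1 < C.length)
    (hsing : C.getD (p - 1) false = C.getD (p + 1) false ∧
      C.getD (p - 1) false ≠ C.getD p false) :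
    countRunsOf (C.getD p false)
        (C.take (p - 1) ++ [C.getD (p - 1) false] ++ C.drop (p + 2))
      = countRunsOf (C.getD p false) C - 1 ∧
    ((C.take (p - 1) ++ [C.getD (p - 1) false] ++ C.drop (p + 2)).count true : ℤ)
        - (C.take (p - 1) ++ [C.getD (p - 1) false] ++ C.drop (p + 2)).count false
      = (C.count true : ℤ) - C.count false := by
  obtain ⟨hsame, hdiff⟩ := hsing
  set c := C.getD p false
  have hleft : C.getD (p - 1) false = !c := Bool.eq_not_iff.mpr hdiff
  have hC : C = C.take (p - 1) ++ (!c) :: c :: (!c) :: C.drop (p + 2) := by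
    have := C.eq_take_append_getD_cons_cons_cons false (i := p - 1) (by omega)
    rwa [show p - 1 + 1 = p by omega, show p - 1 + 2 = p + 1 by omega,
      show p - 1 + 3 = p + 2 by omega, ← hsame, hleft] at this
  rw [hleft, List.append_assoc, List.singleton_append]
  constructor
  · conv_rhs => rw [hC]
    rw [countRunsOf_eq_countRunsAfter, countRunsOf_eq_countRunsAfter,
      countRunsAfter_append_singleton_run, Nat.add_sub_cancel]
  · conv_rhs => rw [hC]
    simp only [List.count_append, List.count_not_cons_cons]
    push_cast
    ring
end
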